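/- arXiv:2010.01623 — 6 statements merged into one kernel-verified Lean document; each statement's English description precedes it below -/
import Mathlib

section
/- Let n be a natural number and consider the subposet D of the product poset (Fin n → Fin 3) (pointwise order) consisting of those tuples x such that for every index i with i+1 < n, if x(i+1) = 0 then x(i) = 0. Then the number of maximal chains of D, multiplied by 2^n · n!, equals (2n)!. Equivalently, the number of maximal chains of D is the odd double factorial (2n-1)!! = (2n)!/(2^n n!). -/
/-!
A maximal chain of `D` climbs from `⊥` to `⊤` in `2n` steps, each raising one coordinate by one
(`D` is graded by the coordinate sum). Recording the step at which coordinate `i` leaves the value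
`e` turns the chain into a bijection `h : Fin n × Fin 2 ≃ Fin (2n)` increasing in `e`, and the
condition defining `D` says exactly that the first steps `h (i, 0)` decrease in `i`. Every
bijection `Fin n × Fin 2 ≃ Fin (2n)` arises from exactly one such labelling by permuting inside
the fibres and then permuting the fibres, whence `(2n)! = #chains · 2^n · n!`. With values in
`Fin (m + 1)` the same argument gives `(nm)! = #chains · (m!)^n · n!`.
-/

open Finset Function
open scoped Nat

def GradedFlag (α : Type*) [PartialOrder α] [GradeOrder ℕ α] (N : ℕ) : Type _ :=
  {c : Fin (N + 1) → α // Monotone c ∧ ∀ k, grade ℕ (c k) = k}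

section GradedFlag

variable {α : Type*} [PartialOrder α]

lemma IsChain.le_of_grade_le [GradeOrder ℕ α] {s : Set α} (hs : IsChain (· ≤ ·) s) {a b : α}
    (ha : a ∈ s) (hb : b ∈ s) (h : grade ℕ a ≤ grade ℕ b) : a ≤ b :=
  hs.le_of_not_gt hb ha fun hba => (grade_strictMono hba).not_ge h

lemma IsChain.eq_of_grade_eq [GradeOrder ℕ α] {s : Set α} (hs : IsChain (· ≤ ·) s) {a b : α}
    (ha : a ∈ s) (hb : b ∈ s) (h : grade ℕ a = grade ℕ b) : a = b :=
  (hs.le_of_grade_le ha hb h.le).antisymm (hs.le_of_grade_le hb ha h.ge)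

lemma GradedFlag.strictMono [GradeOrder ℕ α] {N : ℕ} (c : GradedFlag α N) : StrictMono c.1 :=
  c.2.1.strictMono_of_injective fun k k' h => Fin.ext <| by rw [← c.2.2 k, ← c.2.2 k', h]

lemma GradedFlag.isMaxChain_range [GradeOrder ℕ α] [OrderTop α] {N : ℕ}
    (hN : grade ℕ (⊤ : α) = N) (c : GradedFlag α N) : IsMaxChain (· ≤ ·) (Set.range c.1) := by
  refine ⟨c.2.1.isChain_range, fun t ht hsub => hsub.antisymm fun y hyt => ?_⟩
  have hy : grade ℕ y < N + 1 := hN ▸ Nat.lt_succ_of_le (grade_mono le_top)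
  exact ⟨⟨_, hy⟩, ht.eq_of_grade_eq (hsub ⟨_, rfl⟩) hyt (c.2.2 _)⟩

lemma IsMaxChain.exists_grade_eq [GradeMinOrder ℕ α] [BoundedOrder α] [Finite α] {C : Set α}
    (hC : IsMaxChain (· ≤ ·) C) {k : ℕ} (hk : k ≤ grade ℕ (⊤ : α)) : ∃ x ∈ C, grade ℕ x = k := by
  induction k with
  | zero => exact ⟨⊥, hC.bot_mem, grade_bot⟩
  | succ k ih =>
    obtain ⟨x, hxC, rfl⟩ := ih (by omega)
    have hx : x < ⊤ := lt_top_iff_ne_top.2 fun h => by rw [h] at hk; omega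
    obtain ⟨y, ⟨hyC, hxy⟩, hmin⟩ :=
      (Set.toFinite {y | y ∈ C ∧ x < y}).exists_minimal ⟨⊤, hC.top_mem, hx⟩
    -- every element of `C` is `≤ x` or `≥ y`, so an element strictly between would extend `C`
    have hcov : x ⋖ y := by
      refine ⟨hxy, fun z hxz hzy => ?_⟩
      have hzC : z ∈ C := by
        refine hC.2 (hC.1.insert fun b hb _ => ?_) (Set.subset_insert z C) ▸ Set.mem_insert z C
        by_cases hxb : x < b
        · exact Or.inl (hzy.le.trans ((hC.1.total hyC hb).elim id (hmin ⟨hb, hxb⟩)))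
        · exact Or.inr ((hC.1.le_of_not_gt hxC hb hxb).trans hxz.le)
      exact hzy.not_ge (hmin ⟨hzC, hxz⟩ hzy.le)
    exact ⟨y, hyC, (Nat.covBy_iff_add_one_eq.1 (hcov.grade ℕ)).symm⟩

theorem nat_card_isMaxChain_eq_gradedFlag [GradeMinOrder ℕ α] [BoundedOrder α] [Finite α]
    {N : ℕ} (hN : grade ℕ (⊤ : α) = N) :
    Nat.card {C : Set α // IsMaxChain (· ≤ ·) C} = Nat.card (GradedFlag α N) := by
  refine (Nat.card_eq_of_bijective (fun c => ⟨Set.range c.1, c.isMaxChain_range hN⟩) ⟨?_, ?_⟩).symm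
  · intro c c' hcc'
    refine Subtype.ext (funext fun k => ?_)
    have hr : Set.range c.1 = Set.range c'.1 := congrArg Subtype.val hcc'
    obtain ⟨j, hj⟩ : c.1 k ∈ Set.range c'.1 := hr ▸ Set.mem_range_self k
    obtain rfl : j = k := Fin.ext <| by rw [← c'.2.2 j, hj, c.2.2 k]
    exact hj.symm
  · rintro ⟨C, hC⟩
    choose x hxC hx using fun k : Fin (N + 1) => hC.exists_grade_eq (k := k) (by omega)
    let c : GradedFlag α N :=
      ⟨x, fun k k' hkk' => hC.1.le_of_grade_le (hxC k) (hxC k') (by simpa [hx] using hkk'), hx⟩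
    exact ⟨c, Subtype.ext <| (c.isMaxChain_range hN).2 hC.1 (Set.range_subset_iff.2 hxC)⟩

end GradedFlag

section Sorting

variable {β : Type*} [LinearOrder β] {k : ℕ}

lemma exists_perm_strictMono_comp {f : Fin k → β} (hf : Injective f) :
    ∃ σ : Equiv.Perm (Fin k), StrictMono (f ∘ σ) :=
  ⟨Tuple.sort f, (Tuple.monotone_sort f).strictMono_of_injective (hf.comp (Tuple.sort f).injective)⟩

lemma StrictMono.eq_and_eq_of_comp_perm_eq {f g : Fin k → β} (hf : StrictMono f)
    (hg : StrictMono g) {σ τ : Equiv.Perm (Fin k)} (h : f ∘ σ = g ∘ τ) : f = g ∧ σ = τ := by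
  obtain rfl : f = g := (hf.range_inj hg).1 <| by
    rw [← σ.surjective.range_comp, h, τ.surjective.range_comp]
  exact ⟨rfl, Equiv.ext fun i => hf.injective (congrFun h i)⟩

lemma lt_card_filter_lt_iff {f : Fin k → β}
    (hf : StrictMono f) (e : Fin k) (b : β) : (e : ℕ) < #{e' | f e' < b} ↔ f e < b := by
  constructor
  · intro he
    by_contra! hb
    have : #{e' | f e' < b} ≤ #(Iio e) :=
      card_le_card fun e' he' => by simpa using hf.lt_iff_lt.1 ((mem_filter.1 he').2.trans_le hb)
    rw [Fin.card_Iio] at this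
    omega
  · intro hb
    have : #(Iic e) ≤ #{e' | f e' < b} :=
      card_le_card fun e' he' => by simpa using (hf.monotone (mem_Iic.1 he')).trans_lt hb
    rw [Fin.card_Iic] at this
    omega

end Sorting

section Labellings

variable {ι β : Type*} [LinearOrder β] {m : ℕ}

theorem nat_card_fiberwise_strictMono_mul [Finite ι] :
    Nat.card {h : ι × Fin m ≃ β // ∀ i, StrictMono fun e => h (i, e)} * m ! ^ Nat.card ι =
      Nat.card (ι × Fin m ≃ β) := by
  rw [show m ! ^ Nat.card ι = Nat.card (ι → Equiv.Perm (Fin m)) by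
    simp [Nat.card_fun, Fintype.card_perm], ← Nat.card_prod]
  refine Nat.card_eq_of_bijective
    (fun p => (Equiv.prodShear (Equiv.refl ι) p.2).trans p.1.1) ⟨?_, fun H => ?_⟩
  · rintro ⟨⟨h, hh⟩, τ⟩ ⟨⟨h', hh'⟩, τ'⟩ hhh'
    have key i := (hh i).eq_and_eq_of_comp_perm_eq (hh' i) (σ := τ i) (τ := τ' i)
      (funext fun e => by simpa using congr($hhh' (i, e)))
    exact Prod.ext (Subtype.ext (Equiv.ext fun p => congrFun (key p.1).1 p.2))
      (funext fun i => (key i).2)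
  · choose σ hσ using fun i =>
      exists_perm_strictMono_comp (H.injective.comp (Prod.mk_right_injective i))
    exact ⟨⟨⟨(Equiv.prodShear (Equiv.refl ι) σ).trans H, hσ⟩, fun i => (σ i).symm⟩,
      Equiv.ext fun p => by simp⟩

theorem nat_card_strictAnti_fiberwise_strictMono_mul [NeZero m] {n : ℕ} :
    Nat.card {h : Fin n × Fin m ≃ β //
        (∀ i, StrictMono fun e => h (i, e)) ∧ StrictAnti fun i => h (i, 0)} * n ! =
      Nat.card {h : Fin n × Fin m ≃ β // ∀ i, StrictMono fun e => h (i, e)} := by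
  rw [show n ! = Nat.card (Equiv.Perm (Fin n)) by simp [Fintype.card_perm], ← Nat.card_prod]
  refine Nat.card_eq_of_bijective (fun p => ⟨(Equiv.prodCongr p.2 (Equiv.refl _)).trans p.1.1,
    fun i => p.1.2.1 (p.2 i)⟩) ⟨?_, fun ⟨H, hH⟩ => ?_⟩
  · rintro ⟨⟨h, hh⟩, σ⟩ ⟨⟨h', hh'⟩, σ'⟩ hhh'
    have hval := congrArg Subtype.val hhh'
    obtain rfl : σ = σ' := (StrictMono.eq_and_eq_of_comp_perm_eq (β := βᵒᵈ) hh.2 hh'.2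
      (funext fun i => congr($hval (i, 0)))).2
    refine Prod.ext (Subtype.ext (Equiv.ext fun p => ?_)) rfl
    simpa using congr($hval (σ.symm p.1, p.2))
  · obtain ⟨σ, hσ⟩ := exists_perm_strictMono_comp (β := βᵒᵈ)
      (f := fun i => OrderDual.toDual (H (i, 0))) (H.injective.comp (Prod.mk_left_injective 0))
    exact ⟨⟨⟨(Equiv.prodCongr σ (Equiv.refl _)).trans H, fun i => hH (σ i), hσ⟩, σ.symm⟩,
      Subtype.ext (Equiv.ext fun ⟨i, e⟩ => by simp)⟩

end Labellings

section Stairs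

variable {ι : Type*} {m N : ℕ}

def stairs (h : ι × Fin m ≃ Fin N) (k : ℕ) (i : ι) : Fin (m + 1) :=
  ⟨#{e | (h (i, e) : ℕ) < k}, Nat.lt_succ_of_le ((card_filter_le _ _).trans (by simp))⟩

lemma stairs_mono (h : ι × Fin m ≃ Fin N) : Monotone (stairs h) := fun k k' (hkk' : k ≤ k') _ =>
  Fin.mk_le_mk.2 <| card_le_card <| monotone_filter_right _ fun _ _ (he : _ < k) => he.trans_le hkk'

lemma sum_stairs [Fintype ι] (h : ι × Fin m ≃ Fin N) {k : ℕ} (hk : k ≤ N) :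
    ∑ i, (stairs h k i : ℕ) = k :=
  calc ∑ i, (stairs h k i : ℕ) = #{p : ι × Fin m | (h p : ℕ) < k} := by
        simp only [stairs, card_filter]
        exact (Fintype.sum_prod_type fun p => if (h p : ℕ) < k then 1 else 0).symm
    _ = #{j : Fin N | (j : ℕ) < k} := card_equiv h (by simp)
    _ = k := by simp [Fin.card_filter_val_lt, hk]

variable {h : ι × Fin m ≃ Fin N}

lemma lt_stairs_iff {i : ι} (hi : StrictMono fun e => h (i, e)) (e : Fin m) (k : ℕ) :
    (e : ℕ) < stairs h k i ↔ (h (i, e) : ℕ) < k :=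
  lt_card_filter_lt_iff (Fin.val_strictMono.comp hi) e k

lemma stairs_eq_zero_iff [NeZero m] {i : ι} (hi : StrictMono fun e => h (i, e)) (k : ℕ) :
    stairs h k i = 0 ↔ k ≤ h (i, 0) := by
  rw [← not_lt, ← lt_stairs_iff hi, Fin.ext_iff]
  simp

lemma eq_of_stairs_eq {h' : ι × Fin m ≃ Fin N} (hh : ∀ i, StrictMono fun e => h (i, e))
    (hh' : ∀ i, StrictMono fun e => h' (i, e)) (H : ∀ k : Fin (N + 1), stairs h k = stairs h' k) :
    h = h' := by
  have key : ∀ p, ∀ k : Fin (N + 1), (h p : ℕ) < k ↔ (h' p : ℕ) < k := fun ⟨i, e⟩ k => by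
    rw [← lt_stairs_iff (hh i), ← lt_stairs_iff (hh' i), H]
  refine Equiv.ext fun p => Fin.ext (eq_of_forall_gt_iff fun k => ?_)
  by_cases hk : k ≤ N
  · exact key p ⟨k, by omega⟩
  · have := (h p).isLt
    have := (h' p).isLt
    constructor <;> intro <;> omega

-- `h.symm j = (i, v)` records that step `j` of the strict chain `c` raises coordinate `i` from `v`.
lemma exists_stairs_eq [Fintype ι] (hN : Fintype.card ι * m = N) {c : Fin (N + 1) → ι → Fin (m + 1)}
    (hc : StrictMono c) :
    ∃ h : ι × Fin m ≃ Fin N,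
      (∀ i, StrictMono fun e => h (i, e)) ∧ ∀ k : Fin (N + 1), stairs h k = c k := by
  choose coord hcoord using fun j : Fin N => (Pi.lt_def.1 (hc j.castSucc_lt_succ)).2
  let g (j : Fin N) : ι × Fin m :=
    (coord j, ⟨c j.castSucc (coord j),
      by simpa [Fin.lt_def] using (hcoord j).trans_le (Fin.le_last _)⟩)
  have hg : Injective g := Injective.of_lt_imp_ne fun j j' hjj' hg => by
    simp only [g, Prod.ext_iff, Fin.ext_iff] at hg
    have := (hcoord j).trans_le (hc.monotone (Fin.succ_le_castSucc_iff.2 hjj') (coord j))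
    rw [Fin.lt_def, hg.2, hg.1] at this
    exact this.false
  let e := Equiv.ofBijective g ((Fintype.bijective_iff_injective_and_card g).2 ⟨hg, by simp [hN]⟩)
  have he (i : ι) (a : Fin m) :
      coord (e.symm (i, a)) = i ∧ (c (e.symm (i, a)).castSucc i : ℕ) = a := by
    have := e.apply_symm_apply (i, a)
    simp only [e, Equiv.ofBijective_apply, g, Prod.ext_iff, Fin.ext_iff] at this
    obtain ⟨h1, h2⟩ := this
    rw [h1] at h2
    exact ⟨h1, h2⟩
  have hsorted (i : ι) : StrictMono fun a => e.symm (i, a) := fun a b hab => by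
    by_contra! hba
    have := hc.monotone (Fin.castSucc_le_castSucc_iff.2 hba) i
    rw [Fin.le_def, (he i b).2, (he i a).2] at this
    exact this.not_gt hab
  refine ⟨e.symm, hsorted, fun k => funext fun i => Fin.ext (eq_of_forall_lt_iff fun v => ?_)⟩
  rcases lt_or_ge v m with hv | hv
  · obtain ⟨hji, hjv⟩ := he i ⟨v, hv⟩
    have hstep := hcoord (e.symm (i, ⟨v, hv⟩))
    rw [hji, Fin.lt_def, hjv] at hstep
    rw [show v = ((⟨v, hv⟩ : Fin m) : ℕ) from rfl, lt_stairs_iff (hsorted i)]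
    constructor
    · intro hjk
      exact hstep.trans_le (hc.monotone (by rw [Fin.le_def, Fin.val_succ]; omega) i)
    · intro hvk
      by_contra! hkj
      have := hc.monotone (show k ≤ (e.symm (i, ⟨v, hv⟩)).castSucc from hkj) i
      rw [Fin.le_def, hjv] at this
      omega
  · have := (stairs e.symm k i).isLt
    have := (c k i).isLt
    constructor <;> intro <;> omega

end Stairs

section Stacked

variable {n m : ℕ}

def IsStacked (x : Fin n → Fin (m + 1)) : Prop :=
  ∀ (i : ℕ) (h : i + 1 < n), x ⟨i + 1, h⟩ = 0 → x ⟨i, Nat.lt_of_succ_lt h⟩ = 0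

lemma IsStacked.eq_zero_of_le {x : Fin n → Fin (m + 1)} (hx : IsStacked x) {i j : Fin n}
    (hij : i ≤ j) (hj : x j = 0) : x i = 0 := by
  obtain ⟨j, hjn⟩ := j
  obtain ⟨d, rfl⟩ := Nat.exists_eq_add_of_le (hij : (i : ℕ) ≤ j)
  induction d with
  | zero => exact hj
  | succ d ih => exact ih (by omega) (Fin.le_def.2 (by simp)) (hx _ hjn hj)

lemma IsStacked.exists_lt_le_sum_eq_add_one {x y : Fin n → Fin (m + 1)} (hx : IsStacked x)
    (hy : IsStacked y) (hxy : x < y) :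
    ∃ z, IsStacked z ∧ x < z ∧ z ≤ y ∧ ∑ j, (z j : ℕ) = ∑ j, (x j : ℕ) + 1 := by
  -- Raise `x` at the last coordinate `i` where it is below `y`; `z` stays stacked because
  -- `x (i + 1) = y (i + 1)` is nonzero, `y` being stacked with `y i ≠ 0`.
  obtain ⟨hle, hne⟩ := Pi.lt_def.1 hxy
  obtain ⟨i, hi, hmax⟩ : ∃ i, x i < y i ∧ ∀ j, i < j → x j = y j := by
    let s := univ.filter fun j => x j < y j
    have hs : s.Nonempty := by simpa [s, Finset.Nonempty] using hne
    exact ⟨s.max' hs, (mem_filter.1 (s.max'_mem hs)).2, fun j hj =>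
      (hle j).eq_of_not_lt fun h => hj.not_ge (s.le_max' j (by simpa [s] using h))⟩
  let z := update x i ⟨x i + 1, by omega⟩
  have hz (j : Fin n) : (z j : ℕ) = x j + if j = i then 1 else 0 := by
    by_cases hj : j = i <;> simp [z, hj]
  refine ⟨z, fun j hj hzj => ?_, Pi.lt_def.2 ⟨fun j => ?_, i, ?_⟩, fun j => ?_, ?_⟩
  · have hzero (k : Fin n) : z k = 0 ↔ x k = 0 ∧ k ≠ i := by
      rw [Fin.ext_iff, hz]
      rcases eq_or_ne k i with rfl | hk <;> simp [*]
    rw [hzero] at hzj ⊢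
    refine ⟨hx j hj hzj.1, fun hji => ?_⟩
    have hyj := hy j hj (hmax _ (hji ▸ Fin.mk_lt_mk.2 j.lt_succ_self) ▸ hzj.1)
    rw [hji] at hyj
    simp [hyj] at hi
  · simp [Fin.le_def, hz]
  · simp [Fin.lt_def, hz]
  · by_cases hj : j = i
    · rw [hj]
      simpa [Fin.le_def, hz] using hi
    · rw [Fin.le_def, hz, if_neg hj, add_zero]
      exact hle j
  · simp [hz, sum_add_distrib]

instance : BoundedOrder {x : Fin n → Fin (m + 1) // IsStacked x} :=
  Subtype.boundedOrder (fun _ _ _ => rfl) (fun _ _ h => h)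

instance : GradeMinOrder ℕ {x : Fin n → Fin (m + 1) // IsStacked x} where
  grade x := ∑ i, (x.1 i : ℕ)
  grade_strictMono x y hxy := by
    obtain ⟨hle, i, hi⟩ := Pi.lt_def.1 (Subtype.coe_lt_coe.2 hxy)
    exact sum_lt_sum (fun j _ => hle j) ⟨i, mem_univ i, hi⟩
  covBy_grade x y hxy := by
    obtain ⟨z, hz, hxz, hzy, hsum⟩ := x.2.exists_lt_le_sum_eq_add_one y.2 hxy.lt
    have hzy : z = y.1 := hzy.eq_of_not_lt fun hzy => hxy.2 (c := ⟨z, hz⟩) hxz hzy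
    exact Nat.covBy_iff_add_one_eq.2 (by rw [← hzy, hsum])
  isMin_grade x hx := by
    rw [hx.eq_bot]
    show IsMin (∑ i, ((⊥ : Fin (m + 1)) : ℕ))
    simp [bot_eq_zero]

lemma isStacked_stairs [NeZero m] {N : ℕ} {h : Fin n × Fin m ≃ Fin N}
    (hh : ∀ i, StrictMono fun e => h (i, e)) (ha : StrictAnti fun i => h (i, 0)) (k : ℕ) :
    IsStacked (stairs h k) := fun j hj hz => by
  rw [stairs_eq_zero_iff (hh _)] at hz ⊢
  exact hz.trans (ha (Fin.mk_lt_mk.2 j.lt_succ_self)).le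

lemma strictAnti_of_isStacked_stairs [NeZero m] {N : ℕ} {h : Fin n × Fin m ≃ Fin N}
    (hh : ∀ i, StrictMono fun e => h (i, e)) (hs : ∀ k : Fin (N + 1), IsStacked (stairs h k)) :
    StrictAnti fun i => h (i, 0) := fun i j hij => by
  let k : Fin (N + 1) := ⟨h (i, 0) + 1, by omega⟩
  have hi : stairs h k i ≠ 0 := by simp [stairs_eq_zero_iff (hh i), k]
  have hj := mt ((hs k).eq_zero_of_le hij.le) hi
  rw [stairs_eq_zero_iff (hh j)] at hj
  refine lt_of_le_of_ne (Fin.le_def.2 (by simpa [k, Nat.lt_succ_iff] using hj)) ?_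
  exact h.injective.ne (by simp [hij.ne'])

theorem nat_card_gradedFlag_isStacked [NeZero m] {N : ℕ} (hN : n * m = N) :
    Nat.card (GradedFlag {x : Fin n → Fin (m + 1) // IsStacked x} N) =
      Nat.card {h : Fin n × Fin m ≃ Fin N //
        (∀ i, StrictMono fun e => h (i, e)) ∧ StrictAnti fun i => h (i, 0)} := by
  refine (Nat.card_eq_of_bijective
    (fun h => ⟨fun k => ⟨stairs h.1 k, isStacked_stairs h.2.1 h.2.2 k⟩,
      fun k k' hkk' => stairs_mono h.1 hkk', fun k => sum_stairs h.1 k.is_le⟩)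
    ⟨fun h h' hhh' => ?_, fun c => ?_⟩).symm
  · refine Subtype.ext (eq_of_stairs_eq h.2.1 h'.2.1 fun k => ?_)
    exact congrArg Subtype.val (congrFun (congrArg Subtype.val hhh') k)
  · obtain ⟨h, hh, hc⟩ := exists_stairs_eq (by simpa using hN)
      ((Subtype.strictMono_coe _).comp c.strictMono)
    exact ⟨⟨h, hh, strictAnti_of_isStacked_stairs hh fun k => hc k ▸ (c.1 k).2⟩,
      Subtype.ext (funext fun k => Subtype.ext (hc k))⟩

theorem nat_card_isMaxChain_isStacked_mul (n m : ℕ) [NeZero m] :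
    Nat.card {C : Set {x : Fin n → Fin (m + 1) // IsStacked x} // IsMaxChain (· ≤ ·) C} *
      (m ! ^ n * n !) = (n * m)! := by
  have htop : grade ℕ (⊤ : {x : Fin n → Fin (m + 1) // IsStacked x}) = n * m := by
    show ∑ i : Fin n, ((⊤ : Fin (m + 1)) : ℕ) = n * m
    simp
  rw [nat_card_isMaxChain_eq_gradedFlag htop, nat_card_gradedFlag_isStacked rfl,
    mul_comm (m ! ^ n), ← mul_assoc, nat_card_strictAnti_fiberwise_strictMono_mul]
  simpa [Nat.card_eq_fintype_card, Fintype.card_equiv finProdFinEquiv] using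
    nat_card_fiberwise_strictMono_mul (ι := Fin n) (β := Fin (n * m)) (m := m)

end Stacked

/-- The number of maximal chains in the stacked hypercube lattice `Σ_n C_1^n`,
represented as the subposet of `Fin n → Fin 3` (pointwise order) of tuples `x`
such that `x (i+1) = 0 → x i = 0`, is the odd double factorial `(2n-1)!! = (2n)!/(2^n n!)`. -/
theorem stmt_0 (n : ℕ) :
    Nat.card {C : Set {x : Fin n → Fin 3 //
        ∀ (i : ℕ) (h : i + 1 < n), x ⟨i + 1, h⟩ = 0 → x ⟨i, Nat.lt_of_succ_lt h⟩ = 0} //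
      IsMaxChain (· ≤ ·) C} * (2 ^ n * Nat.factorial n) = Nat.factorial (2 * n) := by
  rw [show 2 * n = n * 2 by ring]
  exact nat_card_isMaxChain_isStacked_mul n 2
end

section
/- Let k and n be natural numbers. Consider the subposet S of the product poset (Fin n → Fin (k+2)) (pointwise order) consisting of those tuples x such that for every index i with i+1 < n, if (x(i+1) : ℕ) < k then x(i) ≤ x(i+1). Then there is a bijection between the set of maximal chains of S and the set of words w : Fin ((k+1)·n) → Fin n such that (1) every letter a ∈ Fin n occurs exactly k+1 times in w, and (2) for every prefix of w (i.e., for every t ≤ (k+1)·n, restricting w to positions < t) and all letters i < j in Fin n: if i occurs at least once in the prefix, then the number of occurrences of i in the prefix is greater than or equal to the number of occurrences of j in the prefix. -/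
/-!
The rank `x ↦ ∑ i, x i` grades the poset: a strict inequality `x < y` can be climbed one unit at a
time by raising the last coordinate in which `x` and `y` differ, and condition (∗) survives this.
Hence a maximal chain has exactly one element of each rank `0, …, (k+1)n`, consecutive elements
differ by a unit vector, and reading these unit steps from the top down gives a word in which
each letter occurs `k + 1` times. The element of corank `t` has coordinates `k + 1 - cₜ(i)`, where
`cₜ(i)` counts the letter `i` among the first `t` letters, and (∗) for these points is the prefix
condition: if `x i ≤ k`, then (∗) propagates along the coordinates to `x i ≤ x j` for all `j > i`;
conversely, a letter `j` occurring twice before the first occurrence of a smaller letter `i`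
violates the prefix condition right at that occurrence.
-/

open Finset

section GradedChains

variable {α : Type*} [PartialOrder α] {ρ : α → ℕ} {C : Set α}

theorem IsChain.le_of_rank_le (hρ : StrictMono ρ) (hC : IsChain (· ≤ ·) C) {x y : α}
    (hx : x ∈ C) (hy : y ∈ C) (h : ρ x ≤ ρ y) : x ≤ y := by
  rcases hC.total hx hy with hxy | hyx
  · exact hxy
  · exact (eq_of_le_of_not_lt hyx fun hlt => (hρ hlt).not_ge h).ge

theorem IsChain.eq_of_rank_eq (hρ : StrictMono ρ) (hC : IsChain (· ≤ ·) C) {x y : α}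
    (hx : x ∈ C) (hy : y ∈ C) (h : ρ x = ρ y) : x = y :=
  (hC.le_of_rank_le hρ hx hy h.le).antisymm (hC.le_of_rank_le hρ hy hx h.ge)

theorem IsChain.isMaxChain_of_forall_exists_rank_eq (hρ : StrictMono ρ)
    (hC : IsChain (· ≤ ·) C) (h : ∀ y, ∃ c ∈ C, ρ c = ρ y) : IsMaxChain (· ≤ ·) C :=
  ⟨hC, fun _ hs hCs => hCs.antisymm fun y hy => by
    obtain ⟨c, hc, hcy⟩ := h y
    exact hs.eq_of_rank_eq hρ (hCs hc) hy hcy ▸ hc⟩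

theorem IsMaxChain.exists_rank_eq [BoundedOrder α] (hρ : StrictMono ρ)
    (hstep : ∀ x y, x < y → ∃ z, x ≤ z ∧ z ≤ y ∧ ρ z = ρ x + 1)
    (hC : IsMaxChain (· ≤ ·) C) {r : ℕ} (hr₀ : ρ ⊥ ≤ r) (hr : r ≤ ρ ⊤) :
    ∃ x ∈ C, ρ x = r := by
  induction r, hr₀ using Nat.le_induction with
  | base => exact ⟨⊥, hC.bot_mem, rfl⟩
  | succ r _ ih =>
    obtain ⟨x, hxC, rfl⟩ := ih (by omega)
    obtain ⟨b, ⟨hbC, hxb⟩, hbmin⟩ := (InvImage.wf ρ wellFounded_lt).has_min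
      {c ∈ C | ρ x < ρ c} ⟨⊤, hC.top_mem, by omega⟩
    have hxb' : x < b := (hC.1.le_of_rank_le hρ hxC hbC hxb.le).lt_of_ne (by rintro rfl; omega)
    obtain ⟨z, hxz, hzb, hz⟩ := hstep x b hxb'
    refine ⟨z, (Flag.ofIsMaxChain C hC).mem_iff_forall_le_or_ge.2 fun c hc => ?_, hz⟩
    by_cases hcx : ρ c ≤ ρ x
    · exact .inr ((hC.1.le_of_rank_le hρ hc hxC hcx).trans hxz)
    · have hbc := hC.1.le_of_rank_le hρ hbC hc (not_lt.1 (hbmin c ⟨hc, by omega⟩))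
      exact .inl (hzb.trans hbc)

end GradedChains

theorem exists_eq_add_single_of_le_of_sum_eq {ι : Type*} [Fintype ι] [DecidableEq ι]
    {f g : ι → ℕ} (hfg : f ≤ g) (h : ∑ i, g i = ∑ i, f i + 1) :
    ∃ a, g = f + Pi.single a 1 := by
  obtain ⟨a, ha⟩ : ∃ a, f a < g a := by
    by_contra! hge
    simp [le_antisymm hge hfg] at h
  refine ⟨a, funext fun i => ?_⟩
  have hle : ∀ i ∈ univ, (f + Pi.single a 1 : ι → ℕ) i ≤ g i := fun i _ => by
    rcases eq_or_ne i a with rfl | hi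
    · simpa using ha
    · simpa [hi] using hfg i
  refine ((sum_eq_sum_iff_of_le hle).1 ?_ i (mem_univ i)).symm
  simp [sum_add_distrib, h]

section PrefixCount

variable {α : Type*} [DecidableEq α] {N : ℕ}

def prefixCount (w : Fin N → α) (t : ℕ) (a : α) : ℕ :=
  #{p : Fin N | (p : ℕ) < t ∧ w p = a}

variable (w : Fin N → α)

@[simp]
theorem prefixCount_zero : prefixCount w 0 = 0 := by
  ext a; simp [prefixCount]

theorem prefixCount_succ {t : ℕ} (ht : t < N) :
    prefixCount w (t + 1) = prefixCount w t + Pi.single (w ⟨t, ht⟩) 1 := by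
  ext a
  simp only [prefixCount, Pi.add_apply, Pi.single_apply]
  split_ifs with ha
  · rw [← card_insert_of_notMem (a := ⟨t, ht⟩) (by simp)]
    congr 1; ext p
    simp only [mem_filter, mem_univ, true_and, mem_insert, Nat.lt_succ_iff, le_iff_lt_or_eq]
    constructor
    · rintro ⟨hp | hp, hw⟩
      exacts [.inr ⟨hp, hw⟩, .inl (Fin.ext hp)]
    · rintro (rfl | ⟨hp, hw⟩)
      exacts [⟨.inr rfl, ha.symm⟩, ⟨.inl hp, hw⟩]
  · rw [add_zero]; congr 1; ext p
    simp only [mem_filter, mem_univ, true_and, Nat.lt_succ_iff, le_iff_lt_or_eq]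
    constructor
    · rintro ⟨hp | hp, rfl⟩
      exacts [⟨hp, rfl⟩, (ha (congrArg w (Fin.ext hp))).elim]
    · exact fun ⟨hp, hw⟩ => ⟨.inl hp, hw⟩

theorem prefixCount_mono {t t' : ℕ} (h : t ≤ t') (a : α) :
    prefixCount w t a ≤ prefixCount w t' a :=
  card_le_card fun p hp => by
    simp only [mem_filter, mem_univ, true_and] at hp ⊢
    exact ⟨by omega, hp.2⟩

theorem prefixCount_of_le {t : ℕ} (h : N ≤ t) (a : α) :
    prefixCount w t a = #{p | w p = a} := by
  simp only [prefixCount]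
  congr 1; ext p; simp only [mem_filter, mem_univ, true_and, and_iff_right_iff_imp]; intro; omega

theorem prefixCount_le_card (t : ℕ) (a : α) : prefixCount w t a ≤ #{p | w p = a} :=
  card_le_card fun p => by simp +contextual

theorem prefixCount_pos_iff {t : ℕ} {a : α} :
    0 < prefixCount w t a ↔ ∃ p : Fin N, p < t ∧ w p = a := by
  simp [prefixCount, card_pos, filter_nonempty_iff]

theorem sum_prefixCount [Fintype α] {t : ℕ} (ht : t ≤ N) : ∑ a, prefixCount w t a = t := by
  induction t with
  | zero => simp
  | succ t ih => simp [prefixCount_succ w ht, sum_add_distrib, ih (by omega)]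

theorem eq_of_prefixCount_eq {v : Fin N → α}
    (h : ∀ t ≤ N, prefixCount v t = prefixCount w t) : v = w := by
  funext p
  have := h (p + 1) p.2
  rw [prefixCount_succ v p.2, prefixCount_succ w p.2, h p p.2.le, add_right_inj] at this
  simpa [Pi.single_apply] using congrFun this (v p)

end PrefixCount

section Ballot

variable {α : Type*} [DecidableEq α] [LT α] {N m : ℕ} {w : Fin N → α}

def IsBallotWord (m : ℕ) (w : Fin N → α) : Prop :=
  (∀ a, #{p | w p = a} = m) ∧
    ∀ t ≤ N, ∀ i j, i < j → (∃ p : Fin N, (p : ℕ) < t ∧ w p = i) →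
      prefixCount w t j ≤ prefixCount w t i

theorem IsBallotWord.prefixCount_le (hw : IsBallotWord m w) (t : ℕ) (a : α) :
    prefixCount w t a ≤ m :=
  (prefixCount_le_card w t a).trans (hw.1 a).le

theorem IsBallotWord.prefixCount_le_prefixCount (hw : IsBallotWord m w) (t : ℕ) {i j : α}
    (hij : i < j) (hi : 0 < prefixCount w t i) : prefixCount w t j ≤ prefixCount w t i := by
  rcases le_or_gt t N with ht | ht
  · exact hw.2 t ht i j hij ((prefixCount_pos_iff w).1 hi)
  · rw [prefixCount_of_le w ht.le, prefixCount_of_le w ht.le, hw.1, hw.1]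

theorem IsBallotWord.prefixCount_le_of_one_lt (hw : IsBallotWord (m + 1) w) (t : ℕ) {i j : α}
    (hij : i < j) (hj : 1 < prefixCount w t j) : prefixCount w t j ≤ prefixCount w t i := by
  rcases (prefixCount w t i).eq_zero_or_pos with hi | hi
  · exfalso
    have hN : prefixCount w N i = m + 1 := by rw [prefixCount_of_le w le_rfl, hw.1]
    obtain ⟨s, hs, hsmin⟩ :
        ∃ s, 0 < prefixCount w s i ∧ ∀ s' < s, prefixCount w s' i = 0 :=
      have hex : ∃ s, 0 < prefixCount w s i := ⟨N, by omega⟩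
      ⟨Nat.find hex, Nat.find_spec hex, fun s' h => Nat.eq_zero_of_not_pos (Nat.find_min hex h)⟩
    have hts : t < s := by
      by_contra! hst
      have := prefixCount_mono w hst i
      omega
    have hsN : s ≤ N := by
      by_contra! hNs
      have := hsmin N hNs
      omega
    obtain ⟨s, rfl⟩ := Nat.exists_eq_add_one_of_ne_zero (by omega : s ≠ 0)
    -- `i` occurs for the first time at position `s`, after `j` has occurred at least twice
    have hs1 : prefixCount w (s + 1) i ≤ 1 := by
      rw [prefixCount_succ w hsN, Pi.add_apply, hsmin s (by omega), Pi.single_apply]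
      split_ifs <;> simp
    have := hw.prefixCount_le_prefixCount (s + 1) hij hs
    have := prefixCount_mono w hts.le j
    omega
  · exact hw.prefixCount_le_prefixCount t hij hi

end Ballot

abbrev Stacking (k n : ℕ) := {x : Fin n → Fin (k + 2) //
    ∀ (i : ℕ) (h : i + 1 < n), ((x ⟨i + 1, h⟩ : ℕ) < k) →
      x ⟨i, Nat.lt_of_succ_lt h⟩ ≤ x ⟨i + 1, h⟩}

namespace Stacking

variable {k n : ℕ}

theorem condition_iff {f : Fin n → Fin (k + 2)} :
    (∀ (i : ℕ) (h : i + 1 < n), ((f ⟨i + 1, h⟩ : ℕ) < k) →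
      f ⟨i, Nat.lt_of_succ_lt h⟩ ≤ f ⟨i + 1, h⟩) ↔
    ∀ a b : Fin n, (b : ℕ) = a + 1 → (f b : ℕ) < k → (f a : ℕ) ≤ f b := by
  constructor
  · rintro hf ⟨a, ha⟩ ⟨b, hb⟩ (rfl : b = a + 1)
    exact hf a hb
  · exact fun hf i h => hf _ _ rfl

instance : BoundedOrder (Stacking k n) :=
  Subtype.boundedOrder (fun _ _ _ => le_rfl) (fun _ _ _ => le_rfl)

def coords (x : Stacking k n) (i : Fin n) : ℕ := x.1 i

def rank (x : Stacking k n) : ℕ := ∑ i, x.coords i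

theorem coords_injective : Function.Injective (coords : Stacking k n → Fin n → ℕ) :=
  fun _ _ h => Subtype.ext (funext fun i => Fin.ext (congrFun h i))

def ofCoords (c : Fin n → ℕ) (hc : ∀ i, c i ≤ k + 1)
    (h : ∀ a b : Fin n, (b : ℕ) = a + 1 → c b < k → c a ≤ c b) : Stacking k n :=
  ⟨fun i => ⟨c i, Nat.lt_succ_of_le (hc i)⟩,
    condition_iff (f := fun i => ⟨c i, Nat.lt_succ_of_le (hc i)⟩) |>.2 h⟩

@[simp] theorem coords_ofCoords (c : Fin n → ℕ) (hc h) :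
    (ofCoords (k := k) c hc h).coords = c :=
  rfl

theorem coords_le_coords {x y : Stacking k n} : x.coords ≤ y.coords ↔ x ≤ y := Iff.rfl

theorem coords_le (x : Stacking k n) (i : Fin n) : x.coords i ≤ k + 1 :=
  Nat.lt_succ_iff.1 (x.1 i).2

@[simp] theorem coords_bot : (⊥ : Stacking k n).coords = 0 := rfl

@[simp] theorem coords_top : (⊤ : Stacking k n).coords = fun _ => k + 1 := rfl

theorem coords_le_coords_of_succ (x : Stacking k n) {a b : Fin n} (hab : (b : ℕ) = a + 1)
    (hb : x.coords b < k) : x.coords a ≤ x.coords b :=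
  condition_iff.1 x.2 a b hab hb

theorem coords_le_coords_of_lt (x : Stacking k n) {i j : Fin n} (hij : i < j)
    (hi : x.coords i ≤ k) : x.coords i ≤ x.coords j := by
  obtain ⟨j, hj⟩ := j
  induction j with
  | zero => exact absurd (Fin.lt_def.1 hij) (Nat.not_lt_zero _)
  | succ j ih =>
    have hij' : x.coords i ≤ x.coords ⟨j, by omega⟩ := by
      rcases (Nat.lt_succ_iff.1 hij).eq_or_lt with h | h
      · exact le_of_eq (congrArg x.coords (Fin.ext h))
      · exact ih (by omega) h
    by_cases hk : x.coords ⟨j + 1, hj⟩ < k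
    · exact hij'.trans (x.coords_le_coords_of_succ rfl hk)
    · omega

theorem rank_strictMono : StrictMono (rank : Stacking k n → ℕ) := fun x y h => by
  obtain ⟨i, hi⟩ := (Pi.lt_def.1 h).2
  exact sum_lt_sum (fun i _ => coords_le_coords.2 h.le i) ⟨i, mem_univ i, hi⟩

@[simp] theorem rank_bot : rank (⊥ : Stacking k n) = 0 := by simp [rank]

@[simp] theorem rank_top : rank (⊤ : Stacking k n) = (k + 1) * n := by simp [rank, mul_comm]

theorem rank_le (x : Stacking k n) : rank x ≤ (k + 1) * n :=
  rank_top (k := k) ▸ rank_strictMono.monotone le_top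

theorem exists_coords_eq_add_single {x y : Stacking k n} (h : x ≤ y) (hr : rank y = rank x + 1) :
    ∃ a, y.coords = x.coords + Pi.single a 1 :=
  exists_eq_add_single_of_le_of_sum_eq (coords_le_coords.2 h) hr

theorem exists_le_le_rank_eq {x y : Stacking k n} (hxy : x < y) :
    ∃ z, x ≤ z ∧ z ≤ y ∧ rank z = rank x + 1 := by
  -- raise the last coordinate in which `x` and `y` differ
  obtain ⟨i, hi, hlast⟩ := exists_max_image {i | x.coords i < y.coords i} id
    (by obtain ⟨i, hi⟩ := (Pi.lt_def.1 hxy).2; exact ⟨i, mem_filter.2 ⟨mem_univ i, hi⟩⟩)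
  simp only [mem_filter, mem_univ, true_and, id] at hi hlast
  have hle : x.coords ≤ y.coords := coords_le_coords.2 hxy.le
  have hright : ∀ j, i < j → x.coords j = y.coords j := fun j hj =>
    (hle j).eq_of_not_lt fun h => (hlast j h).not_gt hj
  have hcy : x.coords + Pi.single i 1 ≤ y.coords := fun j => by
    rcases eq_or_ne j i with rfl | hj
    · simpa using hi
    · simpa [hj] using hle j
  refine ⟨ofCoords (x.coords + Pi.single i 1) (fun j => (hcy j).trans (y.coords_le j)) ?_,
    coords_le_coords.1 le_self_add, coords_le_coords.1 hcy, ?_⟩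
  · intro a b hab hb
    rcases eq_or_ne a i with rfl | hai
    · have hba : b ≠ a := by rintro rfl; omega
      have hxy := hright b (Fin.lt_def.2 (by omega))
      simp only [Pi.add_apply, Pi.single_eq_same, Pi.single_eq_of_ne hba, add_zero] at hb ⊢
      have := y.coords_le_coords_of_succ hab (by omega)
      omega
    · have hxab := x.coords_le_coords_of_succ hab
      rcases eq_or_ne b i with rfl | hbi
      · simp only [Pi.add_apply, Pi.single_eq_same, Pi.single_eq_of_ne hai, add_zero] at hb ⊢
        have := hxab (by omega)
        omega
      · simp only [Pi.add_apply, Pi.single_eq_of_ne hai, Pi.single_eq_of_ne hbi,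
          add_zero] at hb ⊢
        exact hxab hb
  · simp [rank, coords_ofCoords, sum_add_distrib]

section Words

variable {w : Fin ((k + 1) * n) → Fin n} (hw : IsBallotWord (k + 1) w)

def ofWord (t : ℕ) : Stacking k n :=
  ofCoords (fun i => k + 1 - prefixCount w t i) (fun _ => Nat.sub_le _ _) fun a b hab hb => by
    have := hw.prefixCount_le_of_one_lt t (Fin.lt_def.2 (by omega) : a < b) (by omega)
    omega

@[simp] theorem coords_ofWord (t : ℕ) :
    (ofWord hw t).coords = fun i => k + 1 - prefixCount w t i :=
  rfl

theorem antitone_ofWord : Antitone (ofWord hw) := fun _ _ h =>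
  coords_le_coords.1 fun i => by
    have := prefixCount_mono w h i
    simp only [coords_ofWord]
    omega

theorem rank_ofWord {t : ℕ} (ht : t ≤ (k + 1) * n) : rank (ofWord hw t) = (k + 1) * n - t := by
  have h : ∑ i, ((k + 1 - prefixCount w t i) + prefixCount w t i) = ∑ _i : Fin n, (k + 1) :=
    sum_congr rfl fun i _ => Nat.sub_add_cancel (hw.prefixCount_le t i)
  rw [sum_add_distrib, sum_prefixCount w ht] at h
  simp only [sum_const, card_univ, Fintype.card_fin, smul_eq_mul, Nat.mul_comm n] at h
  simp only [rank, coords_ofWord]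
  omega

theorem isMaxChain_range_ofWord : IsMaxChain (· ≤ ·) (Set.range (ofWord hw)) :=
  (antitone_ofWord hw).isChain_range.isMaxChain_of_forall_exists_rank_eq rank_strictMono fun y =>
    ⟨ofWord hw ((k + 1) * n - rank y), Set.mem_range_self _, by
      rw [rank_ofWord hw (Nat.sub_le _ _)]
      have := rank_le y
      omega⟩

end Words

section Chains

theorem exists_mem_rank_eq {C : Set (Stacking k n)} (hC : IsMaxChain (· ≤ ·) C) {r : ℕ}
    (hr : r ≤ (k + 1) * n) : ∃ x ∈ C, rank x = r :=
  hC.exists_rank_eq rank_strictMono (fun _ _ => exists_le_le_rank_eq) (by simp) (by simpa)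

variable {C : Set (Stacking k n)} (hC : IsMaxChain (· ≤ ·) C)

noncomputable def level (t : ℕ) : Stacking k n :=
  (exists_mem_rank_eq hC (Nat.sub_le ((k + 1) * n) t)).choose

theorem level_mem (t : ℕ) : level hC t ∈ C :=
  (exists_mem_rank_eq hC (Nat.sub_le ((k + 1) * n) t)).choose_spec.1

theorem rank_level (t : ℕ) : rank (level hC t) = (k + 1) * n - t :=
  (exists_mem_rank_eq hC (Nat.sub_le ((k + 1) * n) t)).choose_spec.2

theorem eq_level_of_mem {x : Stacking k n} (hx : x ∈ C) : x = level hC ((k + 1) * n - rank x) :=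
  hC.1.eq_of_rank_eq rank_strictMono hx (level_mem hC _) (by
    rw [rank_level]
    have := rank_le x
    omega)

theorem level_zero : level hC 0 = ⊤ :=
  hC.1.eq_of_rank_eq rank_strictMono (level_mem hC 0) hC.top_mem (by simp [rank_level])

theorem level_eq_bot {t : ℕ} (ht : (k + 1) * n ≤ t) : level hC t = ⊥ :=
  hC.1.eq_of_rank_eq rank_strictMono (level_mem hC t) hC.bot_mem (by simp [rank_level, ht])

theorem exists_coords_level_eq {t : ℕ} (ht : t < (k + 1) * n) :
    ∃ a, (level hC t).coords = (level hC (t + 1)).coords + Pi.single a 1 :=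
  exists_coords_eq_add_single
    (hC.1.le_of_rank_le rank_strictMono (level_mem hC _) (level_mem hC _) (by
      simp only [rank_level]
      omega))
    (by simp only [rank_level]; omega)

noncomputable def wordOf (p : Fin ((k + 1) * n)) : Fin n :=
  (exists_coords_level_eq hC p.2).choose

theorem coords_level_eq (p : Fin ((k + 1) * n)) :
    (level hC p).coords = (level hC (p + 1)).coords + Pi.single (wordOf hC p) 1 :=
  (exists_coords_level_eq hC p.2).choose_spec

theorem coords_level_add_prefixCount {t : ℕ} (ht : t ≤ (k + 1) * n) :
    (level hC t).coords + prefixCount (wordOf hC) t = fun _ => k + 1 := by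
  induction t with
  | zero => simp [level_zero]
  | succ t ih =>
    rw [prefixCount_succ _ ht, ← ih (by omega), coords_level_eq hC ⟨t, ht⟩]
    abel

theorem wordOf_isBallotWord : IsBallotWord (k + 1) (wordOf hC) := by
  refine ⟨fun a => ?_, fun t ht i j hij hi => ?_⟩
  · have h := congrFun (coords_level_add_prefixCount hC le_rfl) a
    simpa [level_eq_bot hC le_rfl, prefixCount_of_le _ le_rfl] using h
  · have hi' := congrFun (coords_level_add_prefixCount hC ht) i
    have hj' := congrFun (coords_level_add_prefixCount hC ht) j
    have hpos := (prefixCount_pos_iff _).2 hi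
    simp only [Pi.add_apply] at hi' hj'
    have := (level hC t).coords_le_coords_of_lt hij (by omega)
    omega

theorem ofWord_wordOf {t : ℕ} (ht : t ≤ (k + 1) * n) :
    ofWord (wordOf_isBallotWord hC) t = level hC t :=
  coords_injective <| funext fun i => by
    have := congrFun (coords_level_add_prefixCount hC ht) i
    simp only [Pi.add_apply] at this
    simp only [coords_ofWord]
    omega

theorem range_ofWord_wordOf : Set.range (ofWord (wordOf_isBallotWord hC)) = C :=
  (hC.2 (isMaxChain_range_ofWord _).1 fun _ hx =>
    ⟨_, (ofWord_wordOf hC (Nat.sub_le _ _)).trans (eq_level_of_mem hC hx).symm⟩).symm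

end Chains

theorem wordOf_range_ofWord {w : Fin ((k + 1) * n) → Fin n} (hw : IsBallotWord (k + 1) w) :
    wordOf (isMaxChain_range_ofWord hw) = w := by
  refine eq_of_prefixCount_eq w fun t ht => funext fun i => ?_
  have hC := isMaxChain_range_ofWord hw
  have hlevel : level hC t = ofWord hw t :=
    hC.1.eq_of_rank_eq rank_strictMono (level_mem hC t) (Set.mem_range_self t)
      (by rw [rank_level, rank_ofWord hw ht])
  have h := congrFun (coords_level_add_prefixCount hC ht) i
  rw [hlevel] at h
  have := hw.prefixCount_le t i
  simp only [Pi.add_apply, coords_ofWord] at h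
  omega

end Stacking

/-- Maximal chains of the subposet of `Fin n → Fin (k+2)` defined by condition (∗)
(`(x (i+1) : ℕ) < k → x i ≤ x (i+1)`), i.e. of the iterated stacking `Σ^k_n C^n_1`,
are in bijection with words `w : Fin ((k+1)·n) → Fin n` in which every letter occurs
exactly `k+1` times and, in every prefix, any letter that occurs does so at least as
often as every later letter. -/
theorem stmt_5 (k n : ℕ) :
    Nonempty (
      {C : Set {x : Fin n → Fin (k + 2) //
          ∀ (i : ℕ) (h : i + 1 < n), ((x ⟨i + 1, h⟩ : ℕ) < k) →
            x ⟨i, Nat.lt_of_succ_lt h⟩ ≤ x ⟨i + 1, h⟩} // IsMaxChain (· ≤ ·) C}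
      ≃
      {w : Fin ((k + 1) * n) → Fin n //
        (∀ a : Fin n, (Finset.univ.filter fun p => w p = a).card = k + 1) ∧
        (∀ t : ℕ, t ≤ (k + 1) * n → ∀ i j : Fin n, i < j →
          (∃ p : Fin ((k + 1) * n), (p : ℕ) < t ∧ w p = i) →
          (Finset.univ.filter fun p : Fin ((k + 1) * n) => (p : ℕ) < t ∧ w p = j).card ≤
          (Finset.univ.filter fun p : Fin ((k + 1) * n) => (p : ℕ) < t ∧ w p = i).card)}) :=
  ⟨{ toFun := fun C => ⟨Stacking.wordOf C.2, Stacking.wordOf_isBallotWord C.2⟩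
     invFun := fun w => ⟨Set.range (Stacking.ofWord w.2), Stacking.isMaxChain_range_ofWord w.2⟩
     left_inv := fun C => Subtype.ext (Stacking.range_ofWord_wordOf C.2)
     right_inv := fun w => Subtype.ext (Stacking.wordOf_range_ofWord w.2) }⟩
end

section
/- Let k, n, m be natural numbers, and for x, y : Fin n → Fin (k+m+1) say that x satisfies condition (∗) if for every index i with i+1 < n, whenever (x(i+1) : ℕ) < k one has x(i) ≤ x(i+1). If x and y both satisfy (∗), then the pointwise minimum i ↦ min (x i) (y i) and the pointwise maximum i ↦ max (x i) (y i) both satisfy (∗). Consequently, the elements of the lattice (Fin n → Fin (k+m+1)) (pointwise order) satisfying (∗) form a sublattice (closed under binary meets and joins). -/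
/-- Condition (∗) with parameter `k` on a tuple `x : Fin n → Fin r`:
for each `i` with `i+1 < n`, if `(x (i+1) : ℕ) < k` then `x i ≤ x (i+1)`. -/
def StarCond (k : ℕ) {n r : ℕ} (x : Fin n → Fin r) : Prop :=
  ∀ (i : ℕ) (h : i + 1 < n), ((x ⟨i + 1, h⟩ : ℕ) < k) →
    x ⟨i, Nat.lt_of_succ_lt h⟩ ≤ x ⟨i + 1, h⟩

section LinearOrder

variable {α : Type*} [LinearOrder α] {a a' b b' c : α}

/- In the mixed cases, say `b' < c ≤ b`, only the second implication fires, and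
`min a a' ≤ a' ≤ b' < b` bounds the meet by both `b` and `b'`. -/
theorem min_le_min_of_lt_imp_le (h : b < c → a ≤ b) (h' : b' < c → a' ≤ b')
    (hc : min b b' < c) : min a a' ≤ min b b' := by
  rcases lt_or_ge b c with hb | hb <;> rcases lt_or_ge b' c with hb' | hb'
  · exact min_le_min (h hb) (h' hb')
  · exact le_min ((min_le_left _ _).trans (h hb))
      ((min_le_left _ _).trans ((h hb).trans (hb.le.trans hb')))
  · exact le_min ((min_le_right _ _).trans ((h' hb').trans (hb'.le.trans hb)))
      ((min_le_right _ _).trans (h' hb'))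
  · exact absurd hc (not_lt.mpr (le_min hb hb'))

theorem max_le_max_of_lt_imp_le (h : b < c → a ≤ b) (h' : b' < c → a' ≤ b')
    (hc : max b b' < c) : max a a' ≤ max b b' :=
  have ⟨hb, hb'⟩ := max_lt_iff.mp hc
  max_le_max (h hb) (h' hb')

end LinearOrder

namespace StarCond

variable {k n r : ℕ} {x y : Fin n → Fin r}

theorem inf (hx : StarCond k x) (hy : StarCond k y) : StarCond k (x ⊓ y) := by
  intro i h hk
  simp only [Pi.inf_apply, Fin.le_def, Fin.coe_min] at hk ⊢
  exact min_le_min_of_lt_imp_le (hx i h) (hy i h) hk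

theorem sup (hx : StarCond k x) (hy : StarCond k y) : StarCond k (x ⊔ y) := by
  intro i h hk
  simp only [Pi.sup_apply, Fin.le_def, Fin.coe_max] at hk ⊢
  exact max_le_max_of_lt_imp_le (hx i h) (hy i h) hk

end StarCond

/-- The tuples in `Fin n → Fin (k+m+1)` satisfying condition (∗) are closed under
pointwise minima and maxima, hence under the binary meets and joins of the lattice
`Fin n → Fin (k+m+1)` (pointwise order): they form a sublattice. -/
theorem stmt_8 (k n m : ℕ) (x y : Fin n → Fin (k + m + 1))
    (hx : StarCond k x) (hy : StarCond k y) :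
    StarCond k (fun i => min (x i) (y i)) ∧ StarCond k (fun i => max (x i) (y i)) ∧
    StarCond k (x ⊓ y) ∧ StarCond k (x ⊔ y) :=
  ⟨hx.inf hy, hx.sup hy, hx.inf hy, hx.sup hy⟩
end

section
/- Let n and m be natural numbers. Form the concrete lax sum L of the sequence C^n_0 → C^n_1 → ... → C^n_m, where C^n_j = (Fin n → Fin (j+1)) with the pointwise order and each map C^n_j → C^n_{j+1} is the inclusion given by casting each coordinate from Fin (j+1) into Fin (j+2): L is the sigma type of pairs (j, x) with j ∈ Fin (m+1) and x : Fin n → Fin (j+1), ordered by (j, x) ≤ (l, y) iff j ≤ l and the cast of x into Fin n → Fin (l+1) is ≤ y pointwise. Then L is order-isomorphic to the subposet of (Fin (n+1) → Fin (m+1)) (pointwise order) consisting of those tuples x with x(i) ≤ x(n) for all i < n. -/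
/-!
Casting every chain `Fin (j + 1)` into the largest one `Fin (m + 1)` turns a point `(j, x)` of the
lax sum into a pair `(j, x)` with `x : ι → Fin (m + 1)` bounded above by `j`, and in these
coordinates the lax order is just the product order. Appending the bound `j` to the tuple `x`
(`Fin.snoc`) then identifies such pairs with the tuples of length `n + 1` whose last entry
dominates all the others.
-/

section LaxSum

variable {ι : Type*} {m : ℕ}

def LaxLE (a b : Σ j : Fin (m + 1), ι → Fin ((j : ℕ) + 1)) : Prop :=
  ∃ h : (a.1 : ℕ) ≤ (b.1 : ℕ), ∀ i, Fin.castLE (Nat.succ_le_succ h) (a.2 i) ≤ b.2 i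

def laxSumEquivBoundedPairs :
    (Σ j : Fin (m + 1), ι → Fin ((j : ℕ) + 1)) ≃
      {p : Fin (m + 1) × (ι → Fin (m + 1)) // ∀ i, p.2 i ≤ p.1} where
  toFun a := ⟨(a.1, fun i => Fin.castLE a.1.isLt (a.2 i)),
    fun i => Fin.le_def.2 (Nat.le_of_lt_succ (a.2 i).isLt)⟩
  invFun p := ⟨p.1.1, fun i => ⟨p.1.2 i, Nat.lt_succ_of_le (p.2 i)⟩⟩
  left_inv _ := rfl
  right_inv _ := rfl

theorem laxLE_iff_laxSumEquivBoundedPairs_le (a b : Σ j : Fin (m + 1), ι → Fin ((j : ℕ) + 1)) :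
    LaxLE a b ↔ laxSumEquivBoundedPairs a ≤ laxSumEquivBoundedPairs b := by
  simp only [LaxLE, laxSumEquivBoundedPairs, Equiv.coe_fn_mk, Subtype.mk_le_mk, Prod.mk_le_mk,
    Pi.le_def, Fin.le_def, Fin.val_castLE, exists_prop]

end LaxSum

def Fin.snocOrderIsoBoundedByLast (α : Type*) [LE α] (n : ℕ) :
    {p : α × (Fin n → α) // ∀ i, p.2 i ≤ p.1} ≃o
      {x : Fin (n + 1) → α // ∀ i : Fin (n + 1), (i : ℕ) < n → x i ≤ x (Fin.last n)} where
  toEquiv := (Fin.snocOrderIso fun _ => α).toEquiv.subtypeEquiv fun p => by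
    simp [Fin.forall_fin_succ']
  map_rel_iff' := (Fin.snocOrderIso fun _ => α).le_iff_le

/-- The concrete lax sum of `C^n_0 → C^n_1 → ⋯ → C^n_m` (maps casting each coordinate
into the larger chain), i.e. the sigma type `Σ j : Fin (m+1), Fin n → Fin (j+1)` ordered
by `(j, x) ≤ (l, y)` iff `j ≤ l` and the cast of `x` into `Fin n → Fin (l+1)` is `≤ y`
pointwise, is order-isomorphic to the subposet of `Fin (n+1) → Fin (m+1)` (pointwise
order) of tuples with `x i ≤ x n` for all `i < n`. -/
theorem stmt_11 (n m : ℕ) :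
    ∃ e : (Σ j : Fin (m + 1), (Fin n → Fin ((j : ℕ) + 1))) ≃
        {x : Fin (n + 1) → Fin (m + 1) //
          ∀ i : Fin (n + 1), (i : ℕ) < n → x i ≤ x ⟨n, Nat.lt_succ_self n⟩},
      ∀ a b : Σ j : Fin (m + 1), (Fin n → Fin ((j : ℕ) + 1)),
        (∃ h : (a.1 : ℕ) ≤ (b.1 : ℕ),
            ∀ i, Fin.castLE (Nat.succ_le_succ h) (a.2 i) ≤ b.2 i) ↔ e a ≤ e b :=
  ⟨laxSumEquivBoundedPairs.trans (Fin.snocOrderIsoBoundedByLast (Fin (m + 1)) n).toEquiv,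
    fun a b => (laxLE_iff_laxSumEquivBoundedPairs_le a b).trans
      (Fin.snocOrderIsoBoundedByLast _ n).le_iff_le.symm⟩
end

section
/- Let M : ℕ → Type be a family of posets each having binary meets (each M i a meet-semilattice), and f : ∀ i, M i → M (i+1) a family of monotone maps each of which is order-reflecting and has down-closed image. Let L n be the concrete lax sum of M 0 → ... → M n (pairs (j, x) with (j, x) ≤ (l, y) iff j ≤ l and F_{j,l}(x) ≤ y, F_{j,l} the composite of the f's). Then L n has binary meets; explicitly, for (x, j) and (y, l) with j ≤ l, there exists a (necessarily unique) z' ∈ M j with F_{j,l}(z') = F_{j,l}(x) ⊓ y, and the element (z', j) is the greatest lower bound of {(x, j), (y, l)} in L n. Moreover each embedding ι_j : M j → L n preserves binary meets. -/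
/-- The composite `F_{j,l} = f_{l-1} ∘ ⋯ ∘ f_j : M j → M l` (identity when `j = l`). -/
def laxF {M : ℕ → Type} (f : ∀ i, M i → M (i + 1)) (j : ℕ) (x : M j) :
    ∀ l, j ≤ l → M l
  | 0, h => (Nat.le_zero.mp h) ▸ x
  | l + 1, h =>
    if he : j = l + 1 then he ▸ x
    else f l (laxF f j x l (Nat.lt_succ_iff.mp (lt_of_le_of_ne h he)))

/-- The concrete lax sum of the sequence `M 0 → M 1 → ⋯ → M n`:
pairs `(j, x)` with `j ∈ Fin (n+1)` and `x ∈ M j`. -/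
abbrev LaxSum (M : ℕ → Type) (n : ℕ) : Type := Σ j : Fin (n + 1), M (j : ℕ)

/-- The lax sum order: `(j, x) ≤ (l, y)` iff `j ≤ l` and `F_{j,l}(x) ≤ y`. -/
def laxLE {M : ℕ → Type} [∀ i, PartialOrder (M i)] (f : ∀ i, M i → M (i + 1)) {n : ℕ}
    (a b : LaxSum M n) : Prop :=
  ∃ h : (a.1 : ℕ) ≤ (b.1 : ℕ), laxF f (a.1 : ℕ) a.2 (b.1 : ℕ) h ≤ b.2

/-- The canonical map `f'_n : L n → L (n+1)`, `(j, x) ↦ (j, x)`. -/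
def stepMap {M : ℕ → Type} {n : ℕ} (a : LaxSum M n) : LaxSum M (n + 1) :=
  ⟨⟨(a.1 : ℕ), Nat.lt_succ_of_lt a.1.isLt⟩, a.2⟩

/-- The canonical map `ι_j : M j → L n`, `x ↦ (j, x)`, for `j ≤ n`. -/
def laxIota {M : ℕ → Type} {n : ℕ} (j : ℕ) (h : j ≤ n) (x : M j) : LaxSum M n :=
  ⟨⟨j, Nat.lt_succ_of_le h⟩, x⟩

/-- `s` is the greatest lower bound of `{a, b}` in the lax sum order. -/
def IsLaxGLB {M : ℕ → Type} [∀ i, PartialOrder (M i)] (f : ∀ i, M i → M (i + 1)) {n : ℕ}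
    (a b s : LaxSum M n) : Prop :=
  laxLE f s a ∧ laxLE f s b ∧ ∀ c : LaxSum M n, laxLE f c a → laxLE f c b → laxLE f c s


/-!
Every composite `F_{j,l}` inherits from the `f i` monotonicity, order reflection and down-closed
image. For `j ≤ l`, down-closedness yields `z'` with `F_{j,l}(z') = F_{j,l}(x) ⊓ y`. Any lower
bound `(k, w)` of `(j, x)` and `(l, y)` satisfies `F_{k,l}(w) ≤ F_{j,l}(x) ⊓ y = F_{j,l}(z')`,
and since `F_{k,l} = F_{j,l} ∘ F_{k,j}`, order reflection of `F_{j,l}` gives `F_{k,j}(w) ≤ z'`.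
-/

section LaxComposite

variable {M : ℕ → Type} (f : ∀ i, M i → M (i + 1))

theorem laxF_self {j : ℕ} (x : M j) (h : j ≤ j) : laxF f j x j h = x := by
  cases j <;> · rw [laxF]; try rw [dif_pos rfl]

theorem laxF_succ {j l : ℕ} (x : M j) (hjl : j ≤ l) :
    laxF f j x (l + 1) (hjl.trans l.le_succ) = f l (laxF f j x l hjl) := by
  rw [laxF, dif_neg (by omega)]

theorem laxF_laxF {j k l : ℕ} (x : M j) (hjk : j ≤ k) (hkl : k ≤ l) :
    laxF f k (laxF f j x k hjk) l hkl = laxF f j x l (hjk.trans hkl) := by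
  induction l, hkl using Nat.le_induction with
  | base => rw [laxF_self]
  | succ l hkl ih => rw [laxF_succ f _ hkl, laxF_succ f _ (hjk.trans hkl), ih]

variable [∀ i, Preorder (M i)]

theorem laxF_monotone (hf : ∀ i, Monotone (f i)) {j l : ℕ} (h : j ≤ l) :
    Monotone fun x : M j => laxF f j x l h := by
  induction l, h using Nat.le_induction with
  | base => simp only [laxF_self]; exact monotone_id
  | succ l hjl ih => simp only [laxF_succ f _ hjl]; exact (hf l).comp ih

theorem le_of_laxF_le_laxF (hrefl : ∀ i (a b : M i), f i a ≤ f i b → a ≤ b) {j l : ℕ}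
    (h : j ≤ l) {x y : M j} (hxy : laxF f j x l h ≤ laxF f j y l h) : x ≤ y := by
  induction l, h using Nat.le_induction with
  | base => simpa only [laxF_self] using hxy
  | succ l hjl ih =>
    rw [laxF_succ f _ hjl, laxF_succ f _ hjl] at hxy
    exact ih (hrefl l _ _ hxy)

theorem exists_laxF_eq_of_le (hrefl : ∀ i (a b : M i), f i a ≤ f i b → a ≤ b)
    (hdc : ∀ i (y : M (i + 1)) (x : M i), y ≤ f i x → ∃ z : M i, f i z = y) {j l : ℕ}
    (h : j ≤ l) {x : M j} {y : M l} (hy : y ≤ laxF f j x l h) : ∃ z : M j, laxF f j z l h = y := by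
  induction l, h using Nat.le_induction with
  | base => exact ⟨y, laxF_self f y _⟩
  | succ l hjl ih =>
    rw [laxF_succ f _ hjl] at hy
    obtain ⟨y', rfl⟩ := hdc l y _ hy
    obtain ⟨z, hz⟩ := ih (hrefl l _ _ hy)
    exact ⟨z, by rw [laxF_succ f _ hjl, hz]⟩

end LaxComposite

section LaxMeet

variable {M : ℕ → Type} {f : ∀ i, M i → M (i + 1)} {n : ℕ}

theorem IsLaxGLB.symm [∀ i, PartialOrder (M i)] {a b s : LaxSum M n} (hs : IsLaxGLB f a b s) :
    IsLaxGLB f b a s :=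
  ⟨hs.2.1, hs.1, fun c hca hcb => hs.2.2 c hcb hca⟩

variable [∀ i, SemilatticeInf (M i)]

theorem isLaxGLB_of_laxF_eq_inf (hf : ∀ i, Monotone (f i))
    (hrefl : ∀ i (a b : M i), f i a ≤ f i b → a ≤ b) {j l : Fin (n + 1)} (h : (j : ℕ) ≤ l)
    {x z : M j} {y : M l} (hz : laxF f j z l h = laxF f j x l h ⊓ y) :
    IsLaxGLB f ⟨j, x⟩ ⟨l, y⟩ ⟨j, z⟩ := by
  refine ⟨⟨le_rfl, ?_⟩, ⟨h, hz ▸ inf_le_right⟩, ?_⟩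
  · rw [laxF_self]
    exact le_of_laxF_le_laxF f hrefl h (hz ▸ inf_le_left)
  · rintro ⟨k, w⟩ ⟨hkj, hwx⟩ ⟨_, hwy⟩
    refine ⟨hkj, le_of_laxF_le_laxF f hrefl h ?_⟩
    rw [laxF_laxF, hz]
    exact le_inf (laxF_laxF f w hkj h ▸ laxF_monotone f hf h hwx) hwy

theorem isLaxGLB_laxIota_inf {j : ℕ} (h : j ≤ n) (x y : M j) :
    IsLaxGLB f (laxIota j h x) (laxIota j h y) (laxIota j h (x ⊓ y)) := by
  refine ⟨⟨le_rfl, ?_⟩, ⟨le_rfl, ?_⟩, ?_⟩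
  · exact (laxF_self f _ _).trans_le inf_le_left
  · exact (laxF_self f _ _).trans_le inf_le_right
  · rintro ⟨k, w⟩ ⟨hkj, hwx⟩ ⟨_, hwy⟩
    exact ⟨hkj, le_inf hwx hwy⟩

end LaxMeet

/-- If each `M i` is a meet-semilattice and each `f i` is monotone, order-reflecting and
has down-closed image, then the concrete lax sum `L n` has binary meets; explicitly, for
`j ≤ l` there is a (necessarily unique) `z' ∈ M j` with `F_{j,l}(z') = F_{j,l}(x) ⊓ y`,
and `(j, z')` is the greatest lower bound of `{(j, x), (l, y)}`. Moreover each `ι_j`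
preserves binary meets. -/
theorem stmt_15 (M : ℕ → Type) [∀ i, SemilatticeInf (M i)] (f : ∀ i, M i → M (i + 1))
    (hf : ∀ i, Monotone (f i))
    (hrefl : ∀ i (a b : M i), f i a ≤ f i b → a ≤ b)
    (hdc : ∀ i (y : M (i + 1)) (x : M i), y ≤ f i x → ∃ z : M i, f i z = y)
    (n : ℕ) :
    -- explicit formula for the meet
    (∀ (j l : Fin (n + 1)) (h : (j : ℕ) ≤ (l : ℕ)) (x : M (j : ℕ)) (y : M (l : ℕ)),
        ∃ z' : M (j : ℕ), laxF f (j : ℕ) z' (l : ℕ) h = laxF f (j : ℕ) x (l : ℕ) h ⊓ y ∧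
          IsLaxGLB f ⟨j, x⟩ ⟨l, y⟩ (⟨j, z'⟩ : LaxSum M n)) ∧
    -- L n has binary meets
    (∀ a b : LaxSum M n, ∃ s, IsLaxGLB f a b s) ∧
    -- each ι_j preserves binary meets
    (∀ (j : ℕ) (h : j ≤ n) (x y : M j),
        IsLaxGLB f (laxIota j h x) (laxIota j h y) (laxIota j h (x ⊓ y))) := by
  have explicit_meet : ∀ (j l : Fin (n + 1)) (h : (j : ℕ) ≤ l) (x : M j) (y : M l),
      ∃ z' : M j, laxF f j z' l h = laxF f j x l h ⊓ y ∧
        IsLaxGLB f ⟨j, x⟩ ⟨l, y⟩ (⟨j, z'⟩ : LaxSum M n) := by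
    intro j l h x y
    obtain ⟨z', hz'⟩ := exists_laxF_eq_of_le f hrefl hdc h (inf_le_left : laxF f j x l h ⊓ y ≤ _)
    exact ⟨z', hz', isLaxGLB_of_laxF_eq_inf hf hrefl h hz'⟩
  refine ⟨explicit_meet, ?_, fun j h x y => isLaxGLB_laxIota_inf h x y⟩
  rintro ⟨j, x⟩ ⟨l, y⟩
  rcases le_total (j : ℕ) l with h | h
  · obtain ⟨_, -, hglb⟩ := explicit_meet j l h x y
    exact ⟨_, hglb⟩
  · obtain ⟨_, -, hglb⟩ := explicit_meet l j h y x
    exact ⟨_, hglb.symm⟩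
end

section
/- Let n, k, m be natural numbers. Write C^{n+k⋆}_m for the subposet of (Fin (n+k) → Fin (m+1)) (pointwise order) of tuples x satisfying condition (⋆): x(i) ≤ x(n) for every i < n, and x(n) ≤ x(n+1) ≤ ... ≤ x(n+k−1). Define the top map α : C^{n+k⋆}_m → C^{n+k⋆}_{m+1} by casting each coordinate from Fin (m+1) into Fin (m+2) (same tuple, larger chain), and the left map δ : C^{n+k⋆}_m → C^{n+k+1⋆}_m by appending the maximal value m as a new last coordinate: δ(x) = (x(0), ..., x(n+k−1), m). Then: (1) α and δ are well-defined (land in the respective (⋆)-subposets), monotone, and order-reflecting; (2) the image of the induced left-bottom map C^{n+k⋆}_m → C^{n+k+1⋆}_{m+1} (append m, then cast) is below the image of the top-right map (cast, then append m+1) in the sense that δ followed by casting is pointwise ≤ casting followed by appending m+1; and (3) the square formed by δ (left), α (top), the map C^{n+k+1⋆}_m → C^{n+k+1⋆}_{m+1} given by casting (bottom), and the map C^{n+k⋆}_{m+1} → C^{n+k+1⋆}_{m+1} given by appending m+1 (right) is a lax pushout: the bottom map is order-reflecting with down-closed image, the right map is order-reflecting, their images are disjoint with union all of C^{n+k+1⋆}_{m+1},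 and for z ∈ C^{n+k+1⋆}_m and y ∈ C^{n+k⋆}_{m+1}, the cast of z is ≤ the tuple (y, m+1) if and only if there exists x ∈ C^{n+k⋆}_m with z ≤ (x, m) pointwise (after casting) and the cast of x ≤ y. -/
/-- Condition (⋆) on a tuple `x : Fin N → Fin (m+1)` (with `N = n + k`):
`x i ≤ x n` for every `i < n`, and `x n ≤ x (n+1) ≤ ⋯ ≤ x (N-1)`. -/
def StarRow (n : ℕ) {N m : ℕ} (x : Fin N → Fin (m + 1)) : Prop :=
  (∀ (i : ℕ) (hi : i < n) (hn : n < N), x ⟨i, Nat.lt_trans hi hn⟩ ≤ x ⟨n, hn⟩) ∧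
  (∀ (j : ℕ), n ≤ j → ∀ (h : j + 1 < N), x ⟨j, Nat.lt_of_succ_lt h⟩ ≤ x ⟨j + 1, h⟩)

/-!
The case analysis behind the lax pushout is on the last coordinate `w (n+k)` of a
(⋆)-tuple `w` with values in `Fin (m+2)`. Since condition (⋆) makes that coordinate the
largest one, either it is `< m+1`, and then `w` is the cast of a tuple with values in
`Fin (m+1)`, or it equals `m+1`, and then `w` is `y` followed by `m+1`. The comparison
condition holds because `z ≤ (x, m)` only constrains the first `n+k` coordinates, so the
first `n+k` coordinates of `z` give the required `x`.
-/

theorem Fin.snoc_le_snoc_iff {α : Type*} [Preorder α] {N : ℕ} {x y : Fin N → α} {v w : α} :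
    (Fin.snoc x v : Fin (N + 1) → α) ≤ Fin.snoc y w ↔ x ≤ y ∧ v ≤ w := by
  simp [Pi.le_def, Fin.forall_fin_succ', and_comm]

theorem Fin.le_snoc_iff {α : Type*} [Preorder α] {N : ℕ} {w : Fin (N + 1) → α}
    {y : Fin N → α} {v : α} : w ≤ Fin.snoc y v ↔ Fin.init w ≤ y ∧ w (Fin.last N) ≤ v := by
  conv_lhs => rw [← Fin.snoc_init_self w]
  exact Fin.snoc_le_snoc_iff

theorem castSucc_comp_le_castSucc_comp_iff {ι : Type*} {m : ℕ} {x y : ι → Fin (m + 1)} :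
    (fun i => (x i).castSucc) ≤ (fun i => (y i).castSucc) ↔ x ≤ y :=
  forall_congr' fun _ => Fin.castSucc_le_castSucc_iff

namespace StarRow

variable {n N m : ℕ}

theorem comp_orderEmbedding_iff {m' : ℕ} (f : Fin (m + 1) ↪o Fin (m' + 1))
    {x : Fin N → Fin (m + 1)} : StarRow n (fun i => f (x i)) ↔ StarRow n x := by
  simp only [StarRow, f.le_iff_le]

theorem castSucc_comp_iff {x : Fin N → Fin (m + 1)} :
    StarRow n (fun i => (x i).castSucc) ↔ StarRow n x :=
  comp_orderEmbedding_iff Fin.castSuccOrderEmb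

theorem snoc {x : Fin N → Fin (m + 1)} {v : Fin (m + 1)} (hx : StarRow n x)
    (hv : ∀ i, x i ≤ v) : StarRow n (Fin.snoc x v : Fin (N + 1) → Fin (m + 1)) := by
  constructor
  · intro i hi hn
    simp only [Fin.snoc]
    split_ifs with _ hnN <;> first | omega | skip
    · exact hx.1 i hi hnN
    · exact hv _
  · intro j hj h
    simp only [Fin.snoc]
    split_ifs with _ hjN <;> first | omega | skip
    · exact hx.2 j hj hjN
    · exact hv _

theorem init {w : Fin (N + 1) → Fin (m + 1)} (hw : StarRow n w) : StarRow n (Fin.init w) :=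
  ⟨fun i hi hn => hw.1 i hi (Nat.lt_succ_of_lt hn),
    fun j hj h => hw.2 j hj (Nat.lt_succ_of_lt h)⟩

theorem le_of_le {x : Fin N → Fin (m + 1)} (hx : StarRow n x) {i j : Fin N} (hni : n ≤ i)
    (hij : i ≤ j) : x i ≤ x j := by
  obtain ⟨i, hi⟩ := i
  obtain ⟨j, hj⟩ := j
  simp only [Fin.mk_le_mk] at hni hij
  induction j, hij using Nat.le_induction with
  | base => exact le_rfl
  | succ j hij ih => exact (ih (by omega)).trans (hx.2 j (hni.trans hij) hj)

theorem le_last {x : Fin (N + 1) → Fin (m + 1)} (hx : StarRow n x) (hn : n ≤ N)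
    (i : Fin (N + 1)) : x i ≤ x (Fin.last N) := by
  by_cases hi : n ≤ i
  · exact hx.le_of_le hi (Fin.le_last i)
  · exact (hx.1 i (by omega) (by omega)).trans (hx.le_of_le le_rfl (Fin.le_last _))

theorem exists_eq_castSucc_comp {w : Fin N → Fin (m + 2)} (hw : StarRow n w)
    (h : ∀ i, w i ≠ Fin.last (m + 1)) :
    ∃ z : Fin N → Fin (m + 1), StarRow n z ∧ w = fun i => (z i).castSucc := by
  have hw_eq : w = fun i => ((w i).castPred (h i)).castSucc :=
    funext fun i => (Fin.castSucc_castPred _ _).symm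
  exact ⟨_, castSucc_comp_iff.mp (hw_eq ▸ hw), hw_eq⟩

end StarRow

theorem castSucc_comp_le_snoc_last_iff_exists {n N m : ℕ} {z : Fin (N + 1) → Fin (m + 1)}
    (hz : StarRow n z) {y : Fin N → Fin (m + 2)} :
    (fun i => (z i).castSucc) ≤ Fin.snoc y (Fin.last (m + 1)) ↔
      ∃ x : Fin N → Fin (m + 1), StarRow n x ∧
        z ≤ (Fin.snoc x (Fin.last m) : Fin (N + 1) → Fin (m + 1)) ∧
        (fun i => (x i).castSucc) ≤ y := by
  simp only [Fin.le_snoc_iff, Fin.le_last, and_true]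
  constructor
  · exact fun h => ⟨Fin.init z, hz.init, le_rfl, h⟩
  · rintro ⟨x, -, hzx, hxy⟩
    exact (castSucc_comp_le_castSucc_comp_iff.mpr hzx).trans hxy

/-- The lax pushout square for the row representation theorem: with
`α : C^{n+k⋆}_m → C^{n+k⋆}_{m+1}` the coordinatewise cast and
`δ : C^{n+k⋆}_m → C^{n+k+1⋆}_m` appending the maximal value `m`, the square with bottom
map the coordinatewise cast `C^{n+k+1⋆}_m → C^{n+k+1⋆}_{m+1}` and right map
`C^{n+k⋆}_{m+1} → C^{n+k+1⋆}_{m+1}` appending `m+1` is a lax pushout. -/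
theorem stmt_19 (n k m : ℕ) :
    -- (1) α and δ are well-defined, monotone and order-reflecting
    (∀ x : Fin (n + k) → Fin (m + 1), StarRow n x →
        StarRow n (fun i => Fin.castSucc (x i))) ∧
    (∀ x : Fin (n + k) → Fin (m + 1), StarRow n x →
        StarRow n (Fin.snoc x (Fin.last m) : Fin (n + k + 1) → Fin (m + 1))) ∧
    (∀ x y : Fin (n + k) → Fin (m + 1), StarRow n x → StarRow n y →
        (x ≤ y ↔ (fun i => Fin.castSucc (x i)) ≤ fun i => Fin.castSucc (y i))) ∧
    (∀ x y : Fin (n + k) → Fin (m + 1), StarRow n x → StarRow n y →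
        (x ≤ y ↔ (Fin.snoc x (Fin.last m) : Fin (n + k + 1) → Fin (m + 1))
          ≤ Fin.snoc y (Fin.last m))) ∧
    -- (2) the square lax commutes: left-bottom ≤ top-right
    (∀ x : Fin (n + k) → Fin (m + 1), StarRow n x →
        (fun i : Fin (n + k + 1) =>
            Fin.castSucc ((Fin.snoc x (Fin.last m) : Fin (n + k + 1) → Fin (m + 1)) i))
          ≤ Fin.snoc (fun i => Fin.castSucc (x i)) (Fin.last (m + 1))) ∧
    -- (3) the square is a lax pushout:
    -- the bottom and right maps are well-defined,
    (∀ z : Fin (n + k + 1) → Fin (m + 1), StarRow n z →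
        StarRow n (fun i => Fin.castSucc (z i))) ∧
    (∀ y : Fin (n + k) → Fin (m + 2), StarRow n y →
        StarRow n (Fin.snoc y (Fin.last (m + 1)) : Fin (n + k + 1) → Fin (m + 2))) ∧
    -- the bottom map is order-reflecting,
    (∀ z z' : Fin (n + k + 1) → Fin (m + 1), StarRow n z → StarRow n z' →
        (fun i => Fin.castSucc (z i)) ≤ (fun i => Fin.castSucc (z' i)) → z ≤ z') ∧
    -- with down-closed image,
    (∀ z : Fin (n + k + 1) → Fin (m + 1), StarRow n z →
        ∀ w : Fin (n + k + 1) → Fin (m + 2), StarRow n w →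
          w ≤ (fun i => Fin.castSucc (z i)) →
          ∃ z₀ : Fin (n + k + 1) → Fin (m + 1), StarRow n z₀ ∧
            w = fun i => Fin.castSucc (z₀ i)) ∧
    -- the right map is order-reflecting,
    (∀ y y' : Fin (n + k) → Fin (m + 2), StarRow n y → StarRow n y' →
        (Fin.snoc y (Fin.last (m + 1)) : Fin (n + k + 1) → Fin (m + 2))
          ≤ Fin.snoc y' (Fin.last (m + 1)) → y ≤ y') ∧
    -- the images are disjoint,
    (∀ (z : Fin (n + k + 1) → Fin (m + 1)) (y : Fin (n + k) → Fin (m + 2)),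
        StarRow n z → StarRow n y →
        (fun i => Fin.castSucc (z i)) ≠ Fin.snoc y (Fin.last (m + 1))) ∧
    -- and their union is everything,
    (∀ w : Fin (n + k + 1) → Fin (m + 2), StarRow n w →
        (∃ z : Fin (n + k + 1) → Fin (m + 1), StarRow n z ∧
            w = fun i => Fin.castSucc (z i)) ∨
        (∃ y : Fin (n + k) → Fin (m + 2), StarRow n y ∧
            w = Fin.snoc y (Fin.last (m + 1)))) ∧
    -- and the lax pushout comparison condition holds
    (∀ (z : Fin (n + k + 1) → Fin (m + 1)) (y : Fin (n + k) → Fin (m + 2)),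
        StarRow n z → StarRow n y →
        ((fun i => Fin.castSucc (z i)) ≤ Fin.snoc y (Fin.last (m + 1)) ↔
          ∃ x : Fin (n + k) → Fin (m + 1), StarRow n x ∧
            z ≤ (Fin.snoc x (Fin.last m) : Fin (n + k + 1) → Fin (m + 1)) ∧
            (fun i => Fin.castSucc (x i)) ≤ y)) := by
  refine ⟨fun x hx => StarRow.castSucc_comp_iff.mpr hx,
    fun x hx => hx.snoc fun _ => Fin.le_last _,
    fun x y _ _ => castSucc_comp_le_castSucc_comp_iff.symm,
    fun x y _ _ => by simp [Fin.snoc_le_snoc_iff],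
    fun x _ => ?_,
    fun z hz => StarRow.castSucc_comp_iff.mpr hz,
    fun y hy => hy.snoc fun _ => Fin.le_last _,
    fun z z' _ _ => castSucc_comp_le_castSucc_comp_iff.mp,
    fun z _ w hw hwz => hw.exists_eq_castSucc_comp fun i =>
      ((hwz i).trans_lt (Fin.castSucc_lt_last _)).ne,
    fun y y' _ _ h => (Fin.snoc_le_snoc_iff.mp h).1,
    fun z y _ _ h => ?_,
    fun w hw => ?_,
    fun z y hz _ => castSucc_comp_le_snoc_last_iff_exists hz⟩
  · show Fin.castSucc ∘ _ ≤ _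
    rw [Fin.comp_snoc, Fin.snoc_le_snoc_iff]
    exact ⟨le_rfl, Fin.le_last _⟩
  · have h_last := congrFun h (Fin.last (n + k))
    rw [Fin.snoc_last] at h_last
    exact (Fin.castSucc_lt_last _).ne h_last
  · by_cases h : w (Fin.last (n + k)) = Fin.last (m + 1)
    · exact .inr ⟨Fin.init w, hw.init, by rw [← h, Fin.snoc_init_self]⟩
    · exact .inl (hw.exists_eq_castSucc_comp fun i =>
        ((hw.le_last (Nat.le_add_right n k) i).trans_lt (Fin.lt_last_iff_ne_last.mpr h)).ne)
end
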